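/- For each α > 0 and each t ≥ 0, the composition operator C_{φ_t} with φ_t(z) = e^{-t}z + 1 - e^{-t} maps the Beurling subspace u_α H² into itself, where u_α(z) = exp(α(z+1)/(z-1)). -/

import Mathlib

open Complex Metric

noncomputable def meanSq (f : ℂ → ℂ) (r : ℝ) : ℝ :=
  (2 * Real.pi)⁻¹ * ∫ θ in (0:ℝ)..(2 * Real.pi), ‖f ((r : ℂ) * Complex.exp (θ * Complex.I))‖ ^ 2

def MemH2 (f : ℂ → ℂ) : Prop :=
  DifferentiableOn ℂ f (ball 0 1) ∧ BddAbove (meanSq f '' Set.Ioo 0 1)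

noncomputable def phiFlow (t : ℝ) (z : ℂ) : ℂ :=
  (Real.exp (-t) : ℂ) * z + 1 - (Real.exp (-t) : ℂ)

/-- The atomic singular inner function `u_α(z) = exp(α (z+1)/(z-1))`. -/
noncomputable def uAtomic (α : ℝ) (z : ℂ) : ℂ :=
  Complex.exp ((α : ℂ) * (z + 1) / (z - 1))

/-!
Since `φ_t(z) - 1 = e^{-t} (z - 1)`, one has `u_α ∘ φ_t = u_α · b` with `b(z) = exp(β / (z - 1))`,
`β = 2α (1 - e^{-t}) / e^{-t} ≥ 0`, and `|b| ≤ 1` on the disc; so it suffices that `C_{φ_t}`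
preserves `H²`. This is Littlewood subordination for the affine self-map `φ_t`: on a circle of
radius `ρ < 1`, the Poisson integral of `|g|²` is a harmonic majorant of `|g|²` and the real part
of a holomorphic function, so averaging it along the `φ_t`-image of a smaller circle gives its value
at `φ_t(0) = 1 - e^{-t}`, which Harnack's inequality bounds by `4 e^t` times the mean square of `g`
on the circle of radius `ρ`.
-/

open Real Set

theorem norm_circleAverage_le {E : Type*} [NormedAddCommGroup E] [NormedSpace ℝ E]
    (f : ℂ → E) (c : ℂ) (R : ℝ) :
    ‖circleAverage f c R‖ ≤ circleAverage (fun z ↦ ‖f z‖) c R := by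
  rw [circleAverage_def, circleAverage_def, norm_smul, smul_eq_mul, norm_inv,
    Real.norm_of_nonneg two_pi_pos.le]
  gcongr
  exact intervalIntegral.norm_integral_le_integral_norm two_pi_pos.le

theorem poissonKernel_nonneg {c w z : ℂ} {R : ℝ} (hw : w ∈ ball c R) (hz : z ∈ sphere c R) :
    0 ≤ poissonKernel c w z := by
  rw [mem_ball_iff_norm] at hw
  rw [mem_sphere_iff_norm] at hz
  rw [poissonKernel_def, hz]
  have : ‖w - c‖ ^ 2 ≤ R ^ 2 := by gcongr
  positivity

theorem sq_norm_le_circleAverage_poissonKernel {f : ℂ → ℂ} {c w : ℂ} {R : ℝ}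
    (hf : DifferentiableOn ℂ f (closedBall c R)) (hw : w ∈ ball c R) :
    ‖f w‖ ^ 2 ≤ circleAverage (poissonKernel c w • fun z ↦ ‖f z‖ ^ 2) c R := by
  have hR : 0 ≤ R := (pos_of_mem_ball hw).le
  have hpoisson := ((hf.mul hf).diffContOnCl_ball subset_rfl).circleAverage_poissonKernel_smul hw
  calc ‖f w‖ ^ 2 = ‖circleAverage (poissonKernel c w • fun z ↦ f z * f z) c R‖ := by
        rw [← norm_pow, sq]; congr 1; exact hpoisson.symm
    _ ≤ circleAverage (fun z ↦ ‖poissonKernel c w z • (f z * f z)‖) c R :=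
        norm_circleAverage_le _ _ _
    _ = _ := by
        refine circleAverage_congr_sphere fun z hz ↦ ?_
        rw [abs_of_nonneg hR] at hz
        simp [abs_of_nonneg (poissonKernel_nonneg hw hz), sq]

theorem circleAverage_poissonKernel_smul_le {f : ℂ → ℝ} {c w : ℂ} {R : ℝ}
    (hf : CircleIntegrable f c R) (hf₀ : ∀ z ∈ sphere c R, 0 ≤ f z) (hw : w ∈ ball c R) :
    circleAverage (poissonKernel c w • f) c R
      ≤ (R + ‖w - c‖) / (R - ‖w - c‖) * circleAverage f c R := by
  have hR : 0 ≤ R := (pos_of_mem_ball hw).le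
  have hP : ContinuousOn (poissonKernel c w) (sphere c |R|) := by
    rw [poissonKernel_eq_re_herglotzRieszKernel]
    exact Complex.continuous_re.comp_continuousOn (continuousOn_herglotzRieszKernel_sphere hw)
  rw [← smul_eq_mul, ← circleAverage_smul]
  refine circleAverage_mono (hf.continuousOn_smul hP) hf.const_smul fun z hz ↦ ?_
  rw [abs_of_nonneg hR] at hz
  have hle : poissonKernel c w z ≤ (R + ‖w - c‖) / (R - ‖w - c‖) := by
    rw [poissonKernel_eq_re_herglotzRieszKernel]
    exact re_herglotzRieszKernel_le hz hw
  exact mul_le_mul_of_nonneg_right hle (hf₀ z hz)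

theorem circleAverage_sq_norm_comp_le {g φ : ℂ → ℂ} {r R : ℝ} (hr : 0 ≤ r)
    (hg : DifferentiableOn ℂ g (closedBall 0 R)) (hφ : DifferentiableOn ℂ φ (closedBall 0 r))
    (hmaps : MapsTo φ (closedBall 0 r) (ball 0 R)) :
    circleAverage (fun z ↦ ‖g (φ z)‖ ^ 2) 0 r
      ≤ circleAverage (poissonKernel 0 (φ 0) • fun ζ ↦ ‖g ζ‖ ^ 2) 0 R := by
  have hR : 0 ≤ R := (pos_of_mem_ball (hmaps (mem_closedBall_self hr))).le
  have hg₂_cont : ContinuousOn (fun ζ ↦ ‖g ζ‖ ^ 2) (sphere 0 R) :=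
    (hg.continuousOn.mono sphere_subset_closedBall).norm.pow 2
  have hg₂ : CircleIntegrable (fun ζ ↦ ‖g ζ‖ ^ 2) 0 R := hg₂_cont.circleIntegrable hR
  set G : ℂ → ℂ := fun w ↦
    circleAverage (fun ζ ↦ herglotzRieszKernel 0 w ζ • ((‖g ζ‖ ^ 2 : ℝ) : ℂ)) 0 R
  have hG : DifferentiableOn ℂ G (ball 0 R) :=
    differentiableOn_circleAverage_herglotzRieszKernel_smul
      ((Complex.continuous_ofReal.comp_continuousOn hg₂_cont).circleIntegrable hR)
  have hGre : ∀ w ∈ ball 0 R,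
      (G w).re = circleAverage (poissonKernel 0 w • fun ζ ↦ ‖g ζ‖ ^ 2) 0 R := fun w hw ↦ by
    rw [re_circleAverage_herglotzRieszKernel_smul hg₂ hw, poissonKernel_eq_re_herglotzRieszKernel]
  have hGφ : DifferentiableOn ℂ (G ∘ φ) (closedBall 0 r) := hG.comp hφ hmaps
  have hGφ_cont : ContinuousOn (G ∘ φ) (sphere 0 r) :=
    hGφ.continuousOn.mono sphere_subset_closedBall
  calc circleAverage (fun z ↦ ‖g (φ z)‖ ^ 2) 0 r
      ≤ circleAverage (fun z ↦ (G (φ z)).re) 0 r := by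
        refine circleAverage_mono ?_ ?_ fun z hz ↦ ?_
        · exact (((hg.continuousOn.comp hφ.continuousOn
            (hmaps.mono_right ball_subset_closedBall)).mono sphere_subset_closedBall).norm.pow
            2).circleIntegrable hr
        · exact (Complex.continuous_re.comp_continuousOn hGφ_cont).circleIntegrable hr
        · rw [abs_of_nonneg hr] at hz
          have hφz := hmaps (sphere_subset_closedBall hz)
          rw [hGre _ hφz]
          exact sq_norm_le_circleAverage_poissonKernel hg hφz
    _ = (circleAverage (G ∘ φ) 0 r).re :=
        Complex.reCLM.circleAverage_comp_comm (hGφ_cont.circleIntegrable hr)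
    _ = (G (φ 0)).re := by
        rw [(hGφ.diffContOnCl_ball (by rw [abs_of_nonneg hr])).circleAverage, Function.comp_apply]
    _ = _ := hGre _ (hmaps (mem_closedBall_self hr))

theorem meanSq_eq_circleAverage (f : ℂ → ℂ) (r : ℝ) :
    meanSq f r = circleAverage (fun z ↦ ‖f z‖ ^ 2) 0 r := by
  simp [meanSq, circleAverage_def, circleMap]

theorem MemH2.mul_of_norm_le {f b : ℂ → ℂ} (hf : MemH2 f) {C : ℝ}
    (hb : DifferentiableOn ℂ b (ball 0 1)) (hbC : ∀ z ∈ ball 0 1, ‖b z‖ ≤ C) :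
    MemH2 (fun z ↦ b z * f z) := by
  obtain ⟨hfd, M, hM⟩ := hf
  refine ⟨hb.mul hfd, C ^ 2 * M, ?_⟩
  rintro _ ⟨r, ⟨hr0, hr1⟩, rfl⟩
  have hsphere : sphere (0 : ℂ) r ⊆ ball 0 1 :=
    sphere_subset_closedBall.trans (closedBall_subset_ball hr1)
  have hf₂ : ContinuousOn (fun z ↦ ‖f z‖ ^ 2) (sphere 0 r) :=
    (hfd.continuousOn.mono hsphere).norm.pow 2
  calc meanSq (fun z ↦ b z * f z) r
      ≤ circleAverage (C ^ 2 • fun z ↦ ‖f z‖ ^ 2) 0 r := by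
        rw [meanSq_eq_circleAverage]
        refine circleAverage_mono ?_ ((hf₂.circleIntegrable hr0.le).const_smul) fun z hz ↦ ?_
        · exact (((hb.mul hfd).continuousOn.mono hsphere).norm.pow 2).circleIntegrable hr0.le
        · rw [abs_of_pos hr0] at hz
          rw [Pi.smul_apply, smul_eq_mul, norm_mul, mul_pow]
          gcongr
          exact hbC z (hsphere hz)
    _ ≤ C ^ 2 * M := by
        rw [circleAverage_smul, smul_eq_mul, ← meanSq_eq_circleAverage]
        exact mul_le_mul_of_nonneg_left (hM ⟨r, ⟨hr0, hr1⟩, rfl⟩) (sq_nonneg C)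

theorem differentiable_phiFlow (t : ℝ) : Differentiable ℂ (phiFlow t) := by
  unfold phiFlow
  fun_prop

theorem norm_phiFlow_le {t : ℝ} (ht : 0 ≤ t) (z : ℂ) :
    ‖phiFlow t z‖ ≤ Real.exp (-t) * ‖z‖ + (1 - Real.exp (-t)) := by
  have hs : Real.exp (-t) ≤ 1 := Real.exp_le_one_iff.2 (by linarith)
  calc ‖phiFlow t z‖ = ‖(Real.exp (-t) : ℂ) * z + ((1 - Real.exp (-t) : ℝ) : ℂ)‖ := by
        rw [phiFlow]; push_cast; ring_nf
    _ ≤ _ := by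
        refine (norm_add_le _ _).trans_eq ?_
        rw [norm_mul, Complex.norm_real, Complex.norm_real, Real.norm_of_nonneg (Real.exp_pos _).le,
          Real.norm_of_nonneg (sub_nonneg.2 hs)]

theorem MemH2.comp_phiFlow {g : ℂ → ℂ} (hg : MemH2 g) {t : ℝ} (ht : 0 ≤ t) :
    MemH2 (g ∘ phiFlow t) := by
  obtain ⟨hgd, M, hM⟩ := hg
  set s := Real.exp (-t) with hs_def
  have hs0 : 0 < s := Real.exp_pos _
  have hs1 : s ≤ 1 := Real.exp_le_one_iff.2 (by linarith)
  refine ⟨hgd.comp (differentiable_phiFlow t).differentiableOn fun z hz ↦ ?_, 4 / s * M, ?_⟩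
  · rw [mem_ball_zero_iff] at hz ⊢
    have : ‖phiFlow t z‖ ≤ s * ‖z‖ + (1 - s) := norm_phiFlow_le ht z
    nlinarith
  rintro _ ⟨r, ⟨hr0, hr1⟩, rfl⟩
  -- any radius strictly between `s * r + (1 - s)` and `1` works; this one keeps the Harnack
  -- constant below `4 / s` uniformly in `r`
  set ρ := 1 - s * (1 - r) / 2 with hρ
  have hρ0 : 0 < ρ := by nlinarith
  have hρ1 : ρ < 1 := by nlinarith
  have hmaps : MapsTo (phiFlow t) (closedBall 0 r) (ball 0 ρ) := fun z hz ↦ by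
    rw [mem_closedBall_zero_iff] at hz
    rw [mem_ball_zero_iff]
    have : ‖phiFlow t z‖ ≤ s * ‖z‖ + (1 - s) := norm_phiFlow_le ht z
    nlinarith
  have hφ0 : ‖phiFlow t 0 - 0‖ = 1 - s := by
    have : phiFlow t 0 = ((1 - s : ℝ) : ℂ) := by rw [phiFlow, hs_def]; push_cast; ring
    rw [sub_zero, this, Complex.norm_real, Real.norm_of_nonneg (by linarith)]
  have hharnack : (ρ + (1 - s)) / (ρ - (1 - s)) ≤ 4 / s := by
    rw [div_le_div_iff₀ (by nlinarith) hs0]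
    nlinarith
  have hgρ : DifferentiableOn ℂ g (closedBall 0 ρ) := hgd.mono (closedBall_subset_ball hρ1)
  have hmeanSq_ρ : 0 ≤ meanSq g ρ ∧ meanSq g ρ ≤ M := by
    refine ⟨?_, hM ⟨ρ, ⟨hρ0, hρ1⟩, rfl⟩⟩
    rw [meanSq_eq_circleAverage]
    exact circleAverage_nonneg_of_nonneg fun z _ ↦ by positivity
  calc meanSq (g ∘ phiFlow t) r
      ≤ circleAverage (poissonKernel 0 (phiFlow t 0) • fun ζ ↦ ‖g ζ‖ ^ 2) 0 ρ := by
        rw [meanSq_eq_circleAverage]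
        exact circleAverage_sq_norm_comp_le hr0.le hgρ (differentiable_phiFlow t).differentiableOn
          hmaps
    _ ≤ (ρ + (1 - s)) / (ρ - (1 - s)) * meanSq g ρ := by
        rw [meanSq_eq_circleAverage, ← hφ0]
        exact circleAverage_poissonKernel_smul_le
          ((hgρ.continuousOn.mono sphere_subset_closedBall).norm.pow 2 |>.circleIntegrable
            hρ0.le)
          (fun z _ ↦ by positivity) (hmaps (mem_closedBall_self hr0.le))
    _ ≤ 4 / s * M := mul_le_mul hharnack hmeanSq_ρ.2 hmeanSq_ρ.1 (by positivity)

theorem norm_cexp_div_sub_one_le_one {β : ℝ} (hβ : 0 ≤ β) {z : ℂ} (hz : z ∈ ball (0 : ℂ) 1) :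
    ‖cexp (β / (z - 1))‖ ≤ 1 := by
  have hre : (z - 1).re ≤ 0 := by
    have := (Complex.re_le_norm z).trans (mem_ball_zero_iff.1 hz).le
    rw [Complex.sub_re, Complex.one_re]
    linarith
  rw [Complex.norm_exp, Real.exp_le_one_iff, Complex.div_re, Complex.ofReal_re,
    Complex.ofReal_im, zero_mul, zero_div, add_zero]
  exact div_nonpos_of_nonpos_of_nonneg (mul_nonpos_of_nonneg_of_nonpos hβ hre)
    (Complex.normSq_nonneg _)

theorem uAtomic_phiFlow (α t : ℝ) {z : ℂ} (hz : z ≠ 1) :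
    uAtomic α (phiFlow t z)
      = uAtomic α z * cexp (↑(2 * α * (1 - Real.exp (-t)) / Real.exp (-t)) / (z - 1)) := by
  have hz' : z - 1 ≠ 0 := sub_ne_zero.2 hz
  have hs : (Real.exp (-t) : ℂ) ≠ 0 := Complex.ofReal_ne_zero.2 (Real.exp_pos _).ne'
  have hφ : phiFlow t z - 1 = Real.exp (-t) * (z - 1) := by rw [phiFlow]; ring
  have hφ' : phiFlow t z + 1 = Real.exp (-t) * (z - 1) + 2 := by rw [phiFlow]; ring
  rw [uAtomic, uAtomic, ← Complex.exp_add, hφ, hφ']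
  congr 1
  push_cast
  field_simp
  ring

theorem compOp_maps_beurling (α : ℝ) (hα : 0 < α) (t : ℝ) (ht : 0 ≤ t)
    (g : ℂ → ℂ) (hg : MemH2 g) :
    ∃ h : ℂ → ℂ, MemH2 h ∧
      ∀ z ∈ ball (0 : ℂ) 1,
        uAtomic α (phiFlow t z) * g (phiFlow t z) = uAtomic α z * h z := by
  set β := 2 * α * (1 - Real.exp (-t)) / Real.exp (-t)
  have hβ : 0 ≤ β := div_nonneg (mul_nonneg (mul_nonneg zero_le_two hα.le)
    (sub_nonneg.2 (Real.exp_le_one_iff.2 (by linarith)))) (Real.exp_pos _).le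
  have hz1 : ∀ z ∈ ball (0 : ℂ) 1, z ≠ 1 := fun z hz h1 ↦ by simp [h1] at hz
  refine ⟨fun z ↦ cexp (β / (z - 1)) * (g ∘ phiFlow t) z,
    (hg.comp_phiFlow ht).mul_of_norm_le ?_ fun z hz ↦ norm_cexp_div_sub_one_le_one hβ hz,
    fun z hz ↦ ?_⟩
  · exact (differentiableOn_const _).div (differentiableOn_id.sub_const 1)
      (fun z hz ↦ sub_ne_zero.2 (hz1 z hz)) |>.cexp
  · rw [uAtomic_phiFlow α t (hz1 z hz), mul_assoc]
    rfl
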